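/- arXiv:2305.09772 — 2 statements merged into one kernel-verified Lean document; each statement's English description precedes it below -/
import Mathlib

section
/- The linear map ι: ℝ^7 → Λ²(ℝ^7)^* sending a vector X to the 2-form X ⌟ φ is injective, and its image is exactly the subspace Λ²₇ = {β ∈ Λ²(ℝ^7)^* : ∗β = (1/2) β ∧ φ}. In particular ι is a linear isomorphism from ℝ^7 onto Λ²₇. -/
open Finset

/-- Vectors in ℝ⁷. -/
abbrev Vec := Fin 7 → ℝ

/-- Exterior forms on ℝ⁷, represented by their coefficients on increasing
multi-indices: the form is `∑ S, α S • e^S` with `e^S` the wedge of the dual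
basis covectors with indices in `S`, in increasing order. -/
abbrev Form := Finset (Fin 7) → ℝ

noncomputable section

/-- The sign such that `e^A ∧ e^B = mergeSign A B • e^(A ∪ B)` for disjoint `A`, `B`
(each written in increasing order). -/
def mergeSign (A B : Finset (Fin 7)) : ℝ :=
  (-1 : ℝ) ^ (∑ i ∈ A, (B.filter (fun j => j < i)).card)

/-- Wedge product of forms, where `k` is the degree of the first factor. -/
def wedge (k : ℕ) (α β : Form) : Form :=
  fun S => ∑ A ∈ S.powerset.filter (fun A => A.card = k),
    mergeSign A (S \ A) * α A * β (S \ A)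

/-- Interior product (contraction) of a vector with a form:
`(iprod v α)(x₁,…) = α(v,x₁,…)`. -/
def iprod (v : Vec) (α : Form) : Form :=
  fun S => ∑ i : Fin 7,
    if i ∈ S then 0
    else (-1 : ℝ) ^ ((S.filter (fun j => j < i)).card) * v i * α (insert i S)

/-- Hodge star for the standard Euclidean metric and orientation on ℝ⁷,
where `k` is the degree of the input form. -/
def hstar (k : ℕ) (α : Form) : Form :=
  fun S => if S.card = 7 - k then mergeSign Sᶜ S * α Sᶜ else 0

/-- `α` is a (pure) form of degree `k`. -/
def IsDeg (k : ℕ) (α : Form) : Prop := ∀ S, S.card ≠ k → α S = 0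

/-- The basis monomial `e^A`. -/
def bm (A : Finset (Fin 7)) : Form := fun S => if S = A then 1 else 0

/-- The standard volume form `e^{1234567}`. -/
def vol : Form := bm Finset.univ

/-- The standard G₂ 3-form
`φ = e^{123} + e^{145} + e^{167} + e^{246} − e^{257} − e^{347} − e^{356}`
(indices shifted to `0,…,6`). -/
def phi : Form :=
  bm {0,1,2} + bm {0,3,4} + bm {0,5,6} + bm {1,3,5}
    - bm {1,4,6} - bm {2,3,6} - bm {2,4,5}

/-- The standard Euclidean inner product on ℝ⁷. -/
def dot (v w : Vec) : ℝ := ∑ i, v i * w i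

/-- The 1-form `⟨v, ·⟩` dual to `v` for the standard metric. -/
def flat (v : Vec) : Form := ∑ i : Fin 7, v i • bm {i}

/-- The inner product on forms making the monomials `e^S` orthonormal. -/
def formInner (α β : Form) : ℝ := ∑ S : Finset (Fin 7), α S * β S

end

/-!
Up to sign, `φ` is the sum of `e^{abc}` over the seven lines `{a,b,c}` of a Fano plane, so
`X ⌟ φ = ∑ c, X c • ω c`, where `ω c` is a signed sum of the three `e^{ab}` with `{a,b,c}` a line.
Every pair lies on exactly one line, so these 21 pairs are distinct and `X` can be read off the
coefficients of `X ⌟ φ`.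

For a 2-form `β`, the component of `∗β = ½ β ∧ φ` on the complement of a pair `{a,b}` on the line
through `c` says that the signed coefficient of `β` at `{a,b}` is the mean of its signed
coefficients at the two other pairs completing `c` to a line. Three numbers each of which is the
mean of the other two are equal, so `Λ²₇` consists exactly of the forms `∑ c, X c • ω c`.
-/

namespace IsDeg

variable {k : ℕ} {α β : Form}

lemma add (hα : IsDeg k α) (hβ : IsDeg k β) : IsDeg k (α + β) := fun S hS => by
  simp [hα S hS, hβ S hS]

lemma sub (hα : IsDeg k α) (hβ : IsDeg k β) : IsDeg k (α - β) := fun S hS => by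
  simp [hα S hS, hβ S hS]

lemma neg (hα : IsDeg k α) : IsDeg k (-α) := fun S hS => by
  simp [hα S hS]

lemma smul (c : ℝ) (hα : IsDeg k α) : IsDeg k (c • α) := fun S hS => by
  simp [hα S hS]

lemma iprod (hα : IsDeg (k + 1) α) (v : Vec) : IsDeg k (iprod v α) := fun S hS =>
  sum_eq_zero fun i _ => by
    split_ifs with hi
    · rfl
    · rw [hα _ (by rw [card_insert_of_notMem hi]; omega), mul_zero]

lemma wedge_apply_eq_zero {l : ℕ} (hβ : IsDeg l β) (α : Form) {S : Finset (Fin 7)}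
    (hS : S.card ≠ k + l) : wedge k α β S = 0 :=
  sum_eq_zero fun A hA => by
    rw [mem_filter, mem_powerset] at hA
    have := card_le_card hA.1
    rw [hβ _ (by rw [card_sdiff_of_subset hA.1, hA.2]; omega), mul_zero]

end IsDeg

lemma isDeg_bm {k : ℕ} {A : Finset (Fin 7)} (hA : A.card = k) : IsDeg k (bm A) :=
  fun S hS => if_neg fun h : S = A => hS (h ▸ hA)

lemma isDeg_phi : IsDeg 3 phi := by
  unfold phi
  repeat first | exact isDeg_bm (by decide) | apply IsDeg.sub | apply IsDeg.add

lemma wedge_add_right (k : ℕ) (α β γ : Form) :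
    wedge k α (β + γ) = wedge k α β + wedge k α γ := by
  funext S
  simp only [wedge, Pi.add_apply, mul_add, sum_add_distrib]

lemma wedge_sub_right (k : ℕ) (α β γ : Form) :
    wedge k α (β - γ) = wedge k α β - wedge k α γ := by
  funext S
  simp only [wedge, Pi.sub_apply, mul_sub, sum_sub_distrib]

lemma wedge_bm_apply (k : ℕ) (α : Form) (B S : Finset (Fin 7)) :
    wedge k α (bm B) S =
      if B ⊆ S ∧ (S \ B).card = k then mergeSign (S \ B) B * α (S \ B) else 0 := by
  have key : ∀ A ⊆ S, S \ A = B ↔ B ⊆ S ∧ A = S \ B := fun A hA => by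
    constructor
    · rintro rfl; exact ⟨sdiff_subset, (Finset.sdiff_sdiff_eq_self hA).symm⟩
    · rintro ⟨hB, rfl⟩; exact Finset.sdiff_sdiff_eq_self hB
  simp only [wedge, bm, mul_ite, mul_one, mul_zero]
  split_ifs with h
  · rw [sum_eq_single_of_mem (S \ B) (by simp [sdiff_subset, h.2]) ?_,
      Finset.sdiff_sdiff_eq_self h.1, if_pos rfl]
    intro A hA hne
    rw [mem_filter, mem_powerset] at hA
    exact if_neg fun h' => hne ((key A hA.1).1 h').2
  · refine sum_eq_zero fun A hA => if_neg fun h' => h ?_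
    rw [mem_filter, mem_powerset] at hA
    obtain ⟨hB, rfl⟩ := (key A hA.1).1 h'
    exact ⟨hB, hA.2⟩

set_option maxRecDepth 10000 in
lemma card_eq_two_iff_mem {S : Finset (Fin 7)} :
    S.card = 2 ↔ S ∈ ({{0,1}, {0,2}, {0,3}, {0,4}, {0,5}, {0,6}, {1,2}, {1,3}, {1,4}, {1,5},
      {1,6}, {2,3}, {2,4}, {2,5}, {2,6}, {3,4}, {3,5}, {3,6}, {4,5}, {4,6}, {5,6}} :
        Finset (Finset (Fin 7))) := by
  revert S; decide

set_option maxRecDepth 10000 in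
lemma card_eq_five_iff_mem {S : Finset (Fin 7)} :
    S.card = 5 ↔ S ∈ ({{0,1,2,3,4}, {0,1,2,3,5}, {0,1,2,3,6}, {0,1,2,4,5}, {0,1,2,4,6},
      {0,1,2,5,6}, {0,1,3,4,5}, {0,1,3,4,6}, {0,1,3,5,6}, {0,1,4,5,6}, {0,2,3,4,5}, {0,2,3,4,6},
      {0,2,3,5,6}, {0,2,4,5,6}, {0,3,4,5,6}, {1,2,3,4,5}, {1,2,3,4,6}, {1,2,3,5,6}, {1,2,4,5,6},
      {1,3,4,5,6}, {2,3,4,5,6}} : Finset (Finset (Fin 7))) := by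
  revert S; decide

lemma univ_fin_seven : (univ : Finset (Fin 7)) = {0, 1, 2, 3, 4, 5, 6} := rfl

def contractPhi (X : Vec) : Form :=
  X 0 • (bm {1,2} + bm {3,4} + bm {5,6}) + X 1 • (-bm {0,2} + bm {3,5} - bm {4,6}) +
    X 2 • (bm {0,1} - bm {3,6} - bm {4,5}) + X 3 • (-bm {0,4} - bm {1,5} + bm {2,6}) +
    X 4 • (bm {0,3} + bm {1,6} + bm {2,5}) + X 5 • (-bm {0,6} + bm {1,3} - bm {2,4}) +
    X 6 • (bm {0,5} - bm {1,4} - bm {2,3})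

def uncontractPhi (β : Form) : Vec :=
  ![β {1,2}, -β {0,2}, β {0,1}, -β {0,4}, β {0,3}, -β {0,6}, β {0,5}]

lemma isDeg_contractPhi (X : Vec) : IsDeg 2 (contractPhi X) := by
  unfold contractPhi
  repeat
    first
    | exact isDeg_bm (by decide)
    | apply IsDeg.add | apply IsDeg.sub | apply IsDeg.smul | apply IsDeg.neg

lemma iprod_phi_eq_contractPhi (X : Vec) : iprod X phi = contractPhi X := by
  funext S
  by_cases hS : S.card = 2
  · have hS' := card_eq_two_iff_mem.1 hS
    fin_cases hS' <;>
      simp (config := { decide := true }) [iprod, contractPhi, phi, bm, Fin.sum_univ_seven,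
        neg_one_pow_eq_ite]
  · rw [isDeg_phi.iprod X S hS, isDeg_contractPhi X S hS]

lemma uncontractPhi_contractPhi : Function.LeftInverse uncontractPhi contractPhi := fun X => by
  funext i
  fin_cases i <;> simp (config := { decide := true }) [uncontractPhi, contractPhi, bm]

set_option maxHeartbeats 800000 in
lemma hstar_two_eq_half_wedge_phi_iff (β : Form) :
    hstar 2 β = (2 : ℝ)⁻¹ • wedge 2 β phi ↔
      (β {1,2} = β {3,4} ∧ β {3,4} = β {5,6}) ∧
      (-β {0,2} = β {3,5} ∧ β {3,5} = -β {4,6}) ∧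
      (β {0,1} = -β {3,6} ∧ -β {3,6} = -β {4,5}) ∧
      (-β {0,4} = -β {1,5} ∧ -β {1,5} = β {2,6}) ∧
      (β {0,3} = β {1,6} ∧ β {1,6} = β {2,5}) ∧
      (-β {0,6} = β {1,3} ∧ β {1,3} = -β {2,4}) ∧
      (β {0,5} = -β {1,4} ∧ -β {1,4} = -β {2,3}) := by
  have off_five (S : Finset (Fin 7)) (hS : S.card ≠ 5) :
      hstar 2 β S = ((2 : ℝ)⁻¹ • wedge 2 β phi) S := by
    rw [Pi.smul_apply, isDeg_phi.wedge_apply_eq_zero β hS, hstar, if_neg hS, smul_zero]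
  rw [funext_iff]
  trans ∀ S, S.card = 5 → hstar 2 β S = (2 : ℝ)⁻¹ * wedge 2 β phi S
  · exact forall_congr' fun S =>
      ⟨fun h _ => h, fun h => if hS : S.card = 5 then h hS else off_five S hS⟩
  simp only [card_eq_five_iff_mem, forall_mem_insert, mem_singleton, forall_eq]
  -- evaluate on each 5-set; complements and differences of literal sets are computed as filters
  simp (config := { decide := true }) only [hstar, compl_eq_univ_sdiff, univ_fin_seven, phi,
    wedge_add_right, wedge_sub_right, Pi.add_apply, Pi.sub_apply, wedge_bm_apply,
    ← filter_notMem_eq_sdiff, filter_insert, filter_singleton, mem_insert, mem_singleton,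
    insert_empty, mergeSign, neg_one_pow_eq_ite, ↓reduceIte]
  constructor <;> intro h <;> casesm* _ ∧ _ <;> constructorm* _ ∧ _ <;> linarith

lemma hstar_contractPhi (X : Vec) :
    hstar 2 (contractPhi X) = (2 : ℝ)⁻¹ • wedge 2 (contractPhi X) phi := by
  rw [hstar_two_eq_half_wedge_phi_iff]
  simp (config := { decide := true }) [contractPhi, bm]

lemma contractPhi_uncontractPhi {β : Form} (hβ : IsDeg 2 β)
    (h : hstar 2 β = (2 : ℝ)⁻¹ • wedge 2 β phi) : contractPhi (uncontractPhi β) = β := by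
  rw [hstar_two_eq_half_wedge_phi_iff] at h
  casesm* _ ∧ _
  funext S
  by_cases hS : S.card = 2
  · have hS' := card_eq_two_iff_mem.1 hS
    fin_cases hS' <;>
      simp (config := { decide := true }) only [contractPhi, uncontractPhi, bm, Pi.add_apply,
        Pi.sub_apply, Pi.neg_apply, Pi.smul_apply, smul_eq_mul, Matrix.cons_val_zero,
        Matrix.cons_val_one, Matrix.cons_val, ↓reduceIte] <;>
      linarith
  · rw [isDeg_contractPhi _ S hS, hβ S hS]

/-- `X ↦ X ⌟ φ` is injective with image exactly
`Λ²₇ = {β : ∗β = ½ β ∧ φ}`, hence a linear isomorphism of `ℝ⁷` onto `Λ²₇`. -/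
theorem stmt5 :
    Function.Injective (fun X : Vec => iprod X phi) ∧
    Set.range (fun X : Vec => iprod X phi)
      = {β : Form | IsDeg 2 β ∧ hstar 2 β = (2 : ℝ)⁻¹ • wedge 2 β phi} := by
  simp only [iprod_phi_eq_contractPhi]
  refine ⟨uncontractPhi_contractPhi.injective, Set.ext fun β => ⟨?_, ?_⟩⟩
  · rintro ⟨X, rfl⟩
    exact ⟨isDeg_contractPhi X, hstar_contractPhi X⟩
  · rintro ⟨hβ, h⟩
    exact ⟨uncontractPhi β, contractPhi_uncontractPhi hβ h⟩
end

section
/- For the standard G₂ 3-form φ on ℝ^7 and any vector X ∈ ℝ^7, one has the 5-form identity (X ⌟ φ) ∧ φ = 2 X♭ ∧ ∗φ, where X♭ is the 1-form metric-dual to X with respect to the standard Euclidean metric. -/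
set_option maxRecDepth 100000
set_option maxHeartbeats 4000000


open Finset

/- ### Integer-coefficient mirror of the computation -/

def phiZ : Finset (Fin 7) → ℤ := fun S =>
  (if S = {0,1,2} then 1 else 0) + (if S = {0,3,4} then 1 else 0)
  + (if S = {0,5,6} then 1 else 0) + (if S = {1,3,5} then 1 else 0)
  - (if S = {1,4,6} then 1 else 0) - (if S = {2,3,6} then 1 else 0)
  - (if S = {2,4,5} then 1 else 0)

def msZ (A B : Finset (Fin 7)) : ℤ :=
  (-1 : ℤ) ^ (∑ i ∈ A, (B.filter (fun j => j < i)).card)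

def Lc (S : Finset (Fin 7)) (i : Fin 7) : ℤ :=
  ∑ A ∈ S.powerset.filter (fun A => A.card = 2),
    if i ∈ A then 0 else
      msZ A (S \ A) * (-1 : ℤ) ^ ((A.filter (fun j => j < i)).card)
        * phiZ (insert i A) * phiZ (S \ A)

def Rc (S : Finset (Fin 7)) (i : Fin 7) : ℤ :=
  2 * ∑ A ∈ S.powerset.filter (fun A => A.card = 1),
    (if A = {i} then 1 else 0) *
    (msZ A (S \ A) * (if (S \ A).card = 7 - 3 then msZ (S \ A)ᶜ (S \ A) * phiZ (S \ A)ᶜ else 0))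

theorem key : ∀ S : Finset (Fin 7), ∀ i : Fin 7, Lc S i = Rc S i := by decide

lemma phi_eq (S : Finset (Fin 7)) : phi S = ((phiZ S : ℤ) : ℝ) := by
  simp only [phi, phiZ, bm, Pi.add_apply, Pi.sub_apply]
  push_cast [apply_ite (Int.cast : ℤ → ℝ)]
  ring

lemma ms_eq (A B : Finset (Fin 7)) : mergeSign A B = ((msZ A B : ℤ) : ℝ) := by
  simp [mergeSign, msZ]

lemma lhs_eq (X : Vec) (S : Finset (Fin 7)) :
    wedge 2 (iprod X phi) phi S = ∑ i, ((Lc S i : ℤ) : ℝ) * X i := by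
  unfold wedge iprod
  simp only [Finset.mul_sum, Finset.sum_mul]
  rw [Finset.sum_comm]
  refine Finset.sum_congr rfl fun i _ => ?_
  rw [Lc, Int.cast_sum, Finset.sum_mul]
  refine Finset.sum_congr rfl fun A hA => ?_
  by_cases h : i ∈ A
  · simp [h]
  · simp only [h, if_false]
    rw [ms_eq, phi_eq, phi_eq]
    push_cast
    ring

lemma rhs_eq (X : Vec) (S : Finset (Fin 7)) :
    (2 : ℝ) * wedge 1 (flat X) (hstar 3 phi) S = ∑ i, ((Rc S i : ℤ) : ℝ) * X i := by
  unfold wedge hstar flat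
  simp only [Finset.sum_apply, Pi.smul_apply, bm, smul_eq_mul, Finset.mul_sum,
    Finset.sum_mul]
  rw [Finset.sum_comm]
  refine Finset.sum_congr rfl fun i _ => ?_
  rw [Rc, Int.cast_mul, Int.cast_sum, Int.cast_ofNat, Finset.mul_sum, Finset.sum_mul]
  refine Finset.sum_congr rfl fun A hA => ?_
  by_cases h : A = {i}
  · simp only [h, if_true]
    by_cases h4 : (S \ {i}).card = 7 - 3
    · simp only [h4, if_true]
      rw [ms_eq, ms_eq, phi_eq]
      push_cast
      ring
    · simp [h4]
  · simp [h]

/-- the 5-form identity `(X ⌟ φ) ∧ φ = 2 X♭ ∧ ∗φ`. -/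
theorem stmt7 (X : Vec) :
    wedge 2 (iprod X phi) phi = (2 : ℝ) • wedge 1 (flat X) (hstar 3 phi) := by
  funext S
  have h2 : ((2 : ℝ) • wedge 1 (flat X) (hstar 3 phi)) S
      = (2 : ℝ) * wedge 1 (flat X) (hstar 3 phi) S := rfl
  rw [h2, lhs_eq X S, rhs_eq X S]
  exact Finset.sum_congr rfl fun i _ => by rw [key S i]
end
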